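/- arXiv:2203.03058 — 3 statements merged into one kernel-verified Lean document; each statement's English description precedes it below -/
import Mathlib

section
/- Base case of Rule 4 safety: suppose value v is decided in round i, and v' is the first non-nil value ever written to any round strictly greater than i, written by proposer p to round i' > i under the decision-table rule (every quorum of each round j with i ≤ j < i' has decision state None, Maybe v', or Decided v' in p's decision table). Then v' = v. -/
/-- Base case of Rule 4 safety.
`reg a j : Option (Option V)` is the (write-once, hence eventual) contents of
register `r_j` on acceptor `a`: `none` unwritten, `some none` nil,
`some (some w)` non-nil value `w`.
`readp a j : Option (Option V)` records proposer `p`'s reads, consistent with `reg`.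
Decision states for `p`'s decision table (for a quorum `Q0` of round `j`):
* Decided w : `p` read `w` from `r_j` on every acceptor of `Q0`;
* Maybe w   : `p` read `w` from some register `r_{j'}` with `j' ≥ j`;
* None      : `p` read nil from `r_j` on some acceptor of `Q0`, or `p` read two
  distinct non-nil values from rounds `≥ j`.
Suppose `v` is decided in round `i` by quorum `Q ∈ Quorums i`, at most one non-nil
value is written per round (Rule 3), `v'` is the first non-nil value written to any
round `> i` (so `p` has read no non-nil value from rounds `> i`), and `p` writes
`v'` to round `i' > i` under the decision-table rule: every quorum of every round
`j` with `i ≤ j < i'` has state None, Maybe v' or Decided v'. Then `v' = v`. -/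
theorem stmt5 {A V : Type*} (Quorums : ℕ → Set (Set A))
    (reg : A → ℕ → Option (Option V))
    (readp : A → ℕ → Option (Option V))
    (hconsist : ∀ a j x, readp a j = some x → reg a j = some x)
    (rule3 : ∀ j a a' w w', reg a j = some (some w) → reg a' j = some (some w') → w = w')
    (i i' : ℕ) (v v' : V) (hii' : i < i')
    (Q : Set A) (hQ : Q ∈ Quorums i) (hQne : Q.Nonempty)
    (hdec : ∀ a ∈ Q, reg a i = some (some v))
    (hfirst : ∀ a j w, i < j → readp a j ≠ some (some w))
    (htable : ∀ j, i ≤ j → j < i' → ∀ Q0 ∈ Quorums j,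
      -- None
      ((∃ a ∈ Q0, readp a j = some none) ∨
        (∃ a a' j1 j2 w1 w2, j ≤ j1 ∧ j ≤ j2 ∧
          readp a j1 = some (some w1) ∧ readp a' j2 = some (some w2) ∧ w1 ≠ w2)) ∨
      -- Maybe v'
      (∃ a j', j ≤ j' ∧ readp a j' = some (some v')) ∨
      -- Decided v'
      (∀ a ∈ Q0, readp a j = some (some v'))) :
    v' = v := by
  obtain ⟨a0, ha0⟩ := hQne
  rcases htable i le_rfl hii' Q hQ with (⟨a, haQ, hr⟩ | ⟨a, a', j1, j2, w1, w2, hj1, hj2, h1, h2, hne⟩) | ⟨a, j', hj', hr⟩ | hdecd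
  · have := hconsist a i none hr
    rw [hdec a haQ] at this
    simp at this
  · have hj1' : j1 = i := by
      rcases lt_or_eq_of_le hj1 with h | h
      · exact absurd h1 (hfirst a j1 w1 h)
      · exact h.symm
    have hj2' : j2 = i := by
      rcases lt_or_eq_of_le hj2 with h | h
      · exact absurd h2 (hfirst a' j2 w2 h)
      · exact h.symm
    subst hj1'; subst hj2'
    exact absurd (rule3 _ a a' w1 w2 (hconsist _ _ _ h1) (hconsist _ _ _ h2)) hne
  · have hj'' : j' = i := by
      rcases lt_or_eq_of_le hj' with h | h
      · exact absurd hr (hfirst a j' v' h)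
      · exact h.symm
    subst hj''
    exact rule3 _ a a0 v' v (hconsist _ _ _ hr) (hdec a0 ha0)
  · have := hconsist a0 i (some v') (hdecd a0 ha0)
    rw [hdec a0 ha0] at this
    simpa using this.symm
end

section
/- Inductive case of Rule 4 safety: suppose value v is decided in round i, every non-nil value written to rounds > i so far equals v, and proposer p writes non-nil value v' to round i' > i under the decision-table rule (every quorum of rounds i to i'−1 has state None, Maybe v', or Decided v' according to p's reads). Then v' = v. -/
/-- Inductive case of Rule 4 safety.
Same model as the base case (write-once registers `reg`, proposer reads `readp`
consistent with `reg`, at most one non-nil value per round, decision states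
None/Maybe/Decided computed from `p`'s reads). Suppose `v` is decided in round `i`
by quorum `Q ∈ Quorums i`, every non-nil value written to rounds `> i` so far
equals `v` (so `p` can only read `v` from non-nil registers of rounds `> i`), and
proposer `p` writes the non-nil value `v'` to round `i' > i` under the
decision-table rule: every quorum of every round `j` with `i ≤ j < i'` has state
None, Maybe v' or Decided v'. Then `v' = v`. -/
theorem stmt6 {A V : Type*} (Quorums : ℕ → Set (Set A))
    (reg : A → ℕ → Option (Option V))
    (readp : A → ℕ → Option (Option V))
    (hconsist : ∀ a j x, readp a j = some x → reg a j = some x)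
    (rule3 : ∀ j a a' w w', reg a j = some (some w) → reg a' j = some (some w') → w = w')
    (i i' : ℕ) (v v' : V) (hii' : i < i')
    (Q : Set A) (hQ : Q ∈ Quorums i) (hQne : Q.Nonempty)
    (hdec : ∀ a ∈ Q, reg a i = some (some v))
    (hind : ∀ a j w, i < j → reg a j = some (some w) → w = v)
    (htable : ∀ j, i ≤ j → j < i' → ∀ Q0 ∈ Quorums j,
      ((∃ a ∈ Q0, readp a j = some none) ∨
        (∃ a a' j1 j2 w1 w2, j ≤ j1 ∧ j ≤ j2 ∧
          readp a j1 = some (some w1) ∧ readp a' j2 = some (some w2) ∧ w1 ≠ w2)) ∨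
      (∃ a j', j ≤ j' ∧ readp a j' = some (some v')) ∨
      (∀ a ∈ Q0, readp a j = some (some v'))) :
    v' = v := by
  obtain ⟨a0, ha0⟩ := hQne
  have key : ∀ a j w, i ≤ j → reg a j = some (some w) → w = v := by
    intro a j w hij hreg
    rcases lt_or_eq_of_le hij with h | h
    · exact hind a j w h hreg
    · subst h; exact rule3 i a a0 w v hreg (hdec a0 ha0)
  rcases htable i le_rfl hii' Q hQ with (⟨a, haQ, hread⟩ | ⟨a, a', j1, j2, w1, w2, h1, h2, hr1, hr2, hne⟩) | ⟨a, j', hj', hread⟩ | hall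
  · have := hconsist a i none hread
    rw [hdec a haQ] at this
    simp at this
  · exact absurd ((key a j1 w1 h1 (hconsist _ _ _ hr1)).trans
      (key a' j2 w2 h2 (hconsist _ _ _ hr2)).symm) hne
  · exact key a j' v' hj' (hconsist _ _ _ hread)
  · exact key a0 i v' le_rfl (hconsist _ _ _ (hall a0 ha0))
end

section
/- In a proposer's decision table, it is impossible for two quorums (in any rounds) to simultaneously have states Maybe v and Maybe v' with v ≠ v', provided the Maybe-update rule is followed: reading a non-nil value w from register r_j sets all quorums of rounds 0 to j from Any to Maybe w and from Maybe w' (w' ≠ w) to None. -/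
/-- No two quorums can simultaneously be in states Maybe v and Maybe v' with
`v ≠ v'`. A quorum `Q ∈ Quorums j` is in state Maybe v when the proposer has
read the non-nil value `v` from some register of a round `≥ j` and the quorum has
not transitioned to None (the None transition fires when nil is read from `r_j`
on a member of `Q`, or when two distinct non-nil values have been read from
rounds `≥ j`). Hence if `Q ∈ Quorums j` is in state Maybe v and `Q' ∈ Quorums k`
is in state Maybe v', then `v = v'`. -/
theorem stmt9 {A V : Type*} (Quorums : ℕ → Set (Set A))
    (readp : A → ℕ → Option (Option V))
    (j k : ℕ) (v v' : V)
    (Q Q' : Set A) (hQ : Q ∈ Quorums j) (hQ' : Q' ∈ Quorums k)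
    -- Q is in state Maybe v
    (hmaybe : ∃ a j', j ≤ j' ∧ readp a j' = some (some v))
    (hnotNone : ¬ ((∃ a ∈ Q, readp a j = some none) ∨
      (∃ a a' j1 j2 w1 w2, j ≤ j1 ∧ j ≤ j2 ∧
        readp a j1 = some (some w1) ∧ readp a' j2 = some (some w2) ∧ w1 ≠ w2)))
    -- Q' is in state Maybe v'
    (hmaybe' : ∃ a k', k ≤ k' ∧ readp a k' = some (some v'))
    (hnotNone' : ¬ ((∃ a ∈ Q', readp a k = some none) ∨
      (∃ a a' k1 k2 w1 w2, k ≤ k1 ∧ k ≤ k2 ∧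
        readp a k1 = some (some w1) ∧ readp a' k2 = some (some w2) ∧ w1 ≠ w2))) :
    v = v' := by
  obtain ⟨a, j', hj', ha⟩ := hmaybe
  obtain ⟨a', k', hk', ha'⟩ := hmaybe'
  by_contra hne
  rcases le_total j k with h | h
  · exact hnotNone (Or.inr ⟨a, a', j', k', v, v', hj', h.trans hk', ha, ha', hne⟩)
  · exact hnotNone' (Or.inr ⟨a, a', j', k', v, v', h.trans hj', hk', ha, ha', hne⟩)
end
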